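/- Let m, r and d be integers with m ≥ 2, d ≥ 1 odd and 2 ≤ 2r ≤ m−1. Set n = md, w = (m(d−1)+2r)/2, α = ⌊w/(n−2w)⌋, s = w mod (n−2w), and let 𝒲 = λA_𝒲 − B_𝒲 be the n×n skew-symmetric pencil given by the direct sum of s copies of M_{α+1} followed by n−2w−s copies of M_α. Then the ℂ-linear subspace {(XᵀA_𝒲 + A_𝒲X, XᵀB_𝒲 + B_𝒲X) : X ∈ ℂ^{n×n}} of pairs of n×n complex matrices has dimension n(n−1) − (1/2)(m−2r−1)(m(d+1)−2r); equivalently, the codimension of the congruence orbit of 𝒲 in the space of md×md skew-symmetric pencils equals (1/2)(m−2r−1)(m(d+1)−2r). -/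

import Mathlib

open Matrix

noncomputable section

/-- The `k × (k+1)` matrix `G_k` with `(G_k)_{i,i} = 1` and all other entries `0`. -/
def Gmat (k : ℕ) : Matrix (Fin k) (Fin (k+1)) ℂ := fun i j => if j.1 = i.1 then 1 else 0

/-- The `k × (k+1)` matrix `F_k` with `(F_k)_{i,i+1} = 1` and all other entries `0`. -/
def Fmat (k : ℕ) : Matrix (Fin k) (Fin (k+1)) ℂ := fun i j => if j.1 = i.1 + 1 then 1 else 0

/-- The `k × k` upper triangular Jordan block `J_k(μ)`. -/
def Jord (k : ℕ) (μ : ℂ) : Matrix (Fin k) (Fin k) ℂ :=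
  fun i j => if i = j then μ else if j.1 = i.1 + 1 then 1 else 0

/-- λ-coefficient of the canonical skew-symmetric singular block
`M_k = λ [[0, G_k],[−G_kᵀ, 0]] − [[0, F_k],[−F_kᵀ, 0]]`, written as a single
`(2k+1) × (2k+1)` matrix (rows/columns `0,…,k-1` correspond to the first block
row/column, rows/columns `k,…,2k` to the second). -/
def MA (k : ℕ) : Matrix (Fin (2*k+1)) (Fin (2*k+1)) ℂ := fun i j =>
  if i.1 < k ∧ j.1 = k + i.1 then 1
  else if j.1 < k ∧ i.1 = k + j.1 then -1 else 0

/-- Constant coefficient of `M_k` (so that `M_k = λ • MA k − MB k`). -/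
def MB (k : ℕ) : Matrix (Fin (2*k+1)) (Fin (2*k+1)) ℂ := fun i j =>
  if i.1 < k ∧ j.1 = k + i.1 + 1 then 1
  else if j.1 < k ∧ i.1 = k + j.1 + 1 then -1 else 0

/-- Sizes of the blocks in the generic skew-symmetric pencil of rank `2w`:
the first `s = w mod (n−2w)` blocks are `M_{α+1}`, the rest are `M_α`,
`α = ⌊w/(n−2w)⌋`. -/
def genIdx (n w : ℕ) (i : Fin (n - 2*w)) : ℕ :=
  if i.1 < w % (n - 2*w) then w / (n - 2*w) + 1 else w / (n - 2*w)

/-- λ-coefficient of the generic pencil `𝒲 = M_{α+1} ⊕ ⋯ ⊕ M_{α+1} ⊕ M_α ⊕ ⋯ ⊕ M_α`. -/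
def WA (n w : ℕ) :
    Matrix ((i : Fin (n - 2*w)) × Fin (2 * genIdx n w i + 1))
           ((i : Fin (n - 2*w)) × Fin (2 * genIdx n w i + 1)) ℂ :=
  Matrix.blockDiagonal' fun i => MA (genIdx n w i)

/-- Constant coefficient of the generic pencil `𝒲`. -/
def WB (n w : ℕ) :
    Matrix ((i : Fin (n - 2*w)) × Fin (2 * genIdx n w i + 1))
           ((i : Fin (n - 2*w)) × Fin (2 * genIdx n w i + 1)) ℂ :=
  Matrix.blockDiagonal' fun i => MB (genIdx n w i)

/-- Congruence orbit of the pencil `λA − B`: all pencils `λ SᵀAS − SᵀBS`, `S` invertible. -/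
def congOrbit {p : Type*} [Fintype p] [DecidableEq p] (A B : Matrix p p ℂ) :
    Set (Matrix p p ℂ × Matrix p p ℂ) :=
  {P | ∃ S : Matrix p p ℂ, IsUnit S ∧ P = (Sᵀ * A * S, Sᵀ * B * S)}

/-- Strict equivalence orbit of the pencil `λA − B`: all pencils `λ QAR − QBR`,
`Q, R` invertible. -/
def eqvOrbit {R C : Type*} [Fintype R] [Fintype C] [DecidableEq R] [DecidableEq C]
    (A B : Matrix R C ℂ) : Set (Matrix R C ℂ × Matrix R C ℂ) :=
  {P | ∃ (Q : Matrix R R ℂ) (Z : Matrix C C ℂ), IsUnit Q ∧ IsUnit Z ∧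
    P = (Q * A * Z, Q * B * Z)}

/-- The (normal) rank of the pencil `λA − B`, i.e. the rank of `λA − B` as a matrix
over the field of rational functions `ℂ(λ)`. -/
def pencilRank {p : Type*} [Fintype p] (A B : Matrix p p ℂ) : ℕ :=
  Matrix.rank (Matrix.of fun i j =>
    (RatFunc.X : RatFunc ℂ) * algebraMap ℂ (RatFunc ℂ) (A i j) -
      algebraMap ℂ (RatFunc ℂ) (B i j))

/-- An `m × m` matrix polynomial of grade `d` is a tuple `(A_0, …, A_d)`,
identified with `P(λ) = λᵈA_d + ⋯ + λA_1 + A_0`.  Its (normal) rank is its rank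
as a matrix over `ℂ(λ)`. -/
def polyRank {m d : ℕ} (P : Fin (d+1) → Matrix (Fin m) (Fin m) ℂ) : ℕ :=
  Matrix.rank (Matrix.of fun a b =>
    ∑ i : Fin (d+1), (RatFunc.X : RatFunc ℂ) ^ i.1 * algebraMap ℂ (RatFunc ℂ) (P i a b))

/-- λ-coefficient of the block-pencil linearization `L_P` of an `m × m` matrix polynomial
of odd grade `d`.  Block row/column indices are `0`-based (`j = i − 1` for the `1`-based
index `i` of the paper): the `(j,j)` block is `λA_{d−j} + A_{d−j−1}` for even `j` and `0`
for odd `j`; the `(j,j+1)` block is `−I` for even `j` and `−λI` for odd `j`; the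
`(j+1,j)` block is `I` for even `j` and `λI` for odd `j`. -/
def LA {m d : ℕ} (P : Fin (d+1) → Matrix (Fin m) (Fin m) ℂ) :
    Matrix (Fin d × Fin m) (Fin d × Fin m) ℂ := fun p q =>
  if p.1 = q.1 then (if p.1.1 % 2 = 0 then P ⟨d - p.1.1, by omega⟩ p.2 q.2 else 0)
  else if q.1.1 = p.1.1 + 1 then (if p.1.1 % 2 = 1 ∧ p.2 = q.2 then -1 else 0)
  else if p.1.1 = q.1.1 + 1 then (if q.1.1 % 2 = 1 ∧ p.2 = q.2 then 1 else 0)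
  else 0

/-- Constant coefficient of the linearization `L_P` (so that `L_P = λ • LA P − LB P`). -/
def LB {m d : ℕ} (P : Fin (d+1) → Matrix (Fin m) (Fin m) ℂ) :
    Matrix (Fin d × Fin m) (Fin d × Fin m) ℂ := fun p q =>
  if p.1 = q.1 then (if p.1.1 % 2 = 0 then -(P ⟨d - p.1.1 - 1, by omega⟩ p.2 q.2) else 0)
  else if q.1.1 = p.1.1 + 1 then (if p.1.1 % 2 = 0 ∧ p.2 = q.2 then 1 else 0)
  else if p.1.1 = q.1.1 + 1 then (if q.1.1 % 2 = 0 ∧ p.2 = q.2 then -1 else 0)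
  else 0

/-- The generalized Sylvester space: all pencils `L_Q` for `Q` an `m × m`
skew-symmetric matrix polynomial of grade `d`. -/
def GSYL (m d : ℕ) :
    Set (Matrix (Fin d × Fin m) (Fin d × Fin m) ℂ × Matrix (Fin d × Fin m) (Fin d × Fin m) ℂ) :=
  {L | ∃ Q : Fin (d+1) → Matrix (Fin m) (Fin m) ℂ,
    (∀ i, (Q i)ᵀ = -(Q i)) ∧ L = (LA Q, LB Q)}

/-- Square of the Frobenius norm of a complex matrix. -/
def frobSq {p q : Type*} [Fintype p] [Fintype q] (A : Matrix p q ℂ) : ℝ :=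
  ∑ i, ∑ j, ‖A i j‖ ^ 2

/-- The point of `ℂ^(2n²)` given by the entries of the pair of matrices `(C, D)`. -/
def pairPoint {n : ℕ} (C D : Matrix (Fin n) (Fin n) ℂ) :
    (Fin n × Fin n) ⊕ (Fin n × Fin n) → ℂ :=
  Sum.elim (fun x => C x.1 x.2) (fun x => D x.1 x.2)

/-- The linear map `X ↦ (XᵀA + AX, XᵀB + BX)` whose range is the tangent space at
`λA − B` to the congruence orbit of `λA − B`. -/
def congTangentMap {p : Type*} [Fintype p] [DecidableEq p] (A B : Matrix p p ℂ) :
    Matrix p p ℂ →ₗ[ℂ] Matrix p p ℂ × Matrix p p ℂ where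
  toFun X := (Xᵀ * A + A * X, Xᵀ * B + B * X)
  map_add' X Y := by
    simp only [Matrix.transpose_add, Matrix.add_mul, Matrix.mul_add, Prod.mk_add_mk,
      Prod.mk.injEq]
    constructor <;> abel
  map_smul' c X := by
    simp only [Matrix.transpose_smul, Matrix.smul_mul, Matrix.mul_smul, smul_add,
      RingHom.id_apply, Prod.smul_mk]

/-- The canonical skew-symmetric Smith form: the direct sum of the `2 × 2` blocks
`[[0, g_j],[−g_j, 0]]`, `j = 1, …, r`, followed by an `(m−2r) × (m−2r)` zero block. -/
def skewSmith (m r : ℕ) (g : Fin r → Polynomial ℂ) : Matrix (Fin m) (Fin m) (Polynomial ℂ) :=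
  fun i j =>
    if h : i.1 + 1 = j.1 ∧ i.1 % 2 = 0 ∧ j.1 < 2*r then g ⟨i.1 / 2, by omega⟩
    else if h' : j.1 + 1 = i.1 ∧ j.1 % 2 = 0 ∧ i.1 < 2*r then -(g ⟨j.1 / 2, by omega⟩)
    else 0

/-- Descriptor of a canonical block of the skew-symmetric Kronecker canonical form:
`H h μ` is the regular block `H_h(μ)` for a finite eigenvalue `μ`, `K k` is the regular
block `K_k` for the infinite eigenvalue, and `M k` is the singular block `M_k`. -/
inductive SkewBlock where
  | H : ℕ → ℂ → SkewBlock
  | K : ℕ → SkewBlock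
  | M : ℕ → SkewBlock

/-- Size of a canonical skew-symmetric block. -/
def blockSize : SkewBlock → ℕ
  | .H h _ => 2*h
  | .K k => 2*k
  | .M k => 2*k + 1

/-- Admissibility of a block: `H_h(μ)` requires `h ≥ 1` and `K_k` requires `k ≥ 1`. -/
def validBlock : SkewBlock → Prop
  | .H h _ => 1 ≤ h
  | .K k => 1 ≤ k
  | .M _ => True

/-- λ-coefficient of a canonical skew-symmetric block:
`H_h(μ) = λ[[0, I_h],[−I_h, 0]] − [[0, J_h(μ)],[−J_h(μ)ᵀ, 0]]`,
`K_k = λ[[0, J_k(0)],[−J_k(0)ᵀ, 0]] − [[0, I_k],[−I_k, 0]]`,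
`M_k = λ[[0, G_k],[−G_kᵀ, 0]] − [[0, F_k],[−F_kᵀ, 0]]`. -/
def blockA : (b : SkewBlock) → Matrix (Fin (blockSize b)) (Fin (blockSize b)) ℂ
  | .H h _ => fun i j =>
      if i.1 < h ∧ j.1 = h + i.1 then 1
      else if j.1 < h ∧ i.1 = h + j.1 then -1 else 0
  | .K k => fun i j =>
      if i.1 < k ∧ j.1 = k + i.1 + 1 then 1
      else if j.1 < k ∧ i.1 = k + j.1 + 1 then -1 else 0
  | .M k => MA k

/-- Constant coefficient of a canonical skew-symmetric block (the block pencil is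
`λ • blockA b − blockB b`). -/
def blockB : (b : SkewBlock) → Matrix (Fin (blockSize b)) (Fin (blockSize b)) ℂ
  | .H h μ => fun i j =>
      if i.1 < h ∧ j.1 = h + i.1 then μ
      else if i.1 < h ∧ j.1 = h + i.1 + 1 then 1
      else if j.1 < h ∧ i.1 = h + j.1 then -μ
      else if j.1 < h ∧ i.1 = h + j.1 + 1 then -1 else 0
  | .K k => fun i j =>
      if i.1 < k ∧ j.1 = k + i.1 then 1
      else if j.1 < k ∧ i.1 = k + j.1 then -1 else 0
  | .M k => MB k

/-- λ-coefficient of the Kronecker regular block `E_k(μ)`, where `μ : Option ℂ`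
(`some c` is a finite eigenvalue `c`, `none` is the eigenvalue `∞`):
`E_k(c) = λI_k − J_k(c)` and `E_k(∞) = λJ_k(0) − I_k`. -/
def EA (k : ℕ) : Option ℂ → Matrix (Fin k) (Fin k) ℂ
  | some _ => 1
  | none => Jord k 0

/-- Constant coefficient of `E_k(μ)` (the block pencil is `λ • EA k μ − EB k μ`). -/
def EB (k : ℕ) : Option ℂ → Matrix (Fin k) (Fin k) ℂ
  | some c => Jord k c
  | none => 1

end

/-!
For skew-symmetric `A`, `B` the kernel of `X ↦ (XᵀA + AX, XᵀB + BX)` consists of the `X` for which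
`AX` and `BX` are symmetric. Let `𝒲 = M_{k_1} ⊕ ⋯ ⊕ M_{k_t}` with non-increasing sizes differing
by at most one, and split block `(i, j)` of `X` into `k_i` top and `k_i + 1` bottom rows, `k_j` top
and `k_j + 1` bottom columns. The symmetry conditions say that the top-right part vanishes, the
bottom-right part is a Toeplitz band with `k_j + 1 - k_i` free diagonals, the top-left part is minus
a transposed piece of the bottom-right part of block `(j, i)`, and the bottom-left parts of blocks
`(i, j)` and `(j, i)` are Hankel and share `k_i + k_j` antidiagonals. With `w = Σ k_i` the kernel
thus has dimension `Σ_{i ≤ j} (k_i + k_j) + Σ_{i,j} (k_j + 1 - k_i) = (t + 1) w + t²`, and by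
rank–nullity the tangent space has dimension `n (n - 1) - (t - 1)(w + t)`, where `n = 2w + t`.
For the generic pencil, `t = m - 2r` and `m(d + 1) - 2r = 2(w + t)`.
-/

namespace SkewPencil

def shiftCoeff (k c : ℕ) : Matrix (Fin (2 * k + 1)) (Fin (2 * k + 1)) ℂ := fun p q =>
  if p.1 < k ∧ q.1 = k + p.1 + c then 1
  else if q.1 < k ∧ p.1 = k + q.1 + c then -1 else 0

theorem shiftCoeff_transpose (k c : ℕ) : (shiftCoeff k c)ᵀ = -shiftCoeff k c := by
  ext p q
  rw [transpose_apply, neg_apply]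
  simp only [shiftCoeff]
  split_ifs <;> first | (exfalso; omega) | norm_num

theorem MA_eq_shiftCoeff (k : ℕ) : MA k = shiftCoeff k 0 := rfl

theorem MB_eq_shiftCoeff (k : ℕ) : MB k = shiftCoeff k 1 := rfl

def shiftAct (k c : ℕ) (f : ℕ → ℂ) (p : ℕ) : ℂ :=
  if p < k then f (k + p + c) else if c ≤ p - k ∧ p - k < k + c then -f (p - k - c) else 0

theorem sum_shiftCoeff_mul {k c : ℕ} (hc : c ≤ 1) (p : Fin (2 * k + 1)) (f : ℕ → ℂ) :
    ∑ r, shiftCoeff k c p r * f r = shiftAct k c f p := by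
  have hterm : ∀ r : Fin (2 * k + 1), shiftCoeff k c p r * f r =
      (if r.1 = k + p.1 + c then (if p.1 < k then f r else 0) else 0) -
      (if r.1 = p.1 - k - c then
        (if k + c ≤ p.1 ∧ p.1 < 2 * k + c then f r else 0) else 0) := by
    intro r
    simp only [shiftCoeff]
    split_ifs <;> first | (exfalso; omega) | ring1
  simp only [hterm, Finset.sum_sub_distrib]
  rw [Fin.sum_univ_eq_sum_range (fun r => if r = k + p.1 + c then (if p.1 < k then f r else 0)
      else 0), Fin.sum_univ_eq_sum_range (fun r => if r = p.1 - k - c then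
      (if k + c ≤ p.1 ∧ p.1 < 2 * k + c then f r else 0) else 0),
    Finset.sum_ite_eq', Finset.sum_ite_eq', shiftAct]
  simp only [Finset.mem_range]
  split_ifs <;> first | (exfalso; omega) | ring1

theorem shiftAct_congr {K c p : ℕ} (hc : c ≤ 1) (hp : p < 2 * K + 1) {f g : ℕ → ℂ}
    (hfg : ∀ a < 2 * K + 1, f a = g a) : shiftAct K c f p = shiftAct K c g p := by
  unfold shiftAct
  split_ifs <;>
    first | rfl | exact hfg _ (by omega) | exact congrArg Neg.neg (hfg _ (by omega))

theorem transpose_mul_add_mul_eq_zero_iff {n R : Type*} [Fintype n] [CommRing R]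
    {S X : Matrix n n R} (hS : Sᵀ = -S) : Xᵀ * S + S * X = 0 ↔ (S * X)ᵀ = S * X := by
  rw [transpose_mul, hS, Matrix.mul_neg, neg_eq_iff_eq_neg, add_eq_zero_iff_eq_neg]

variable {t : ℕ} {k : Fin t → ℕ}

abbrev BlockIdx (k : Fin t → ℕ) := (i : Fin t) × Fin (2 * k i + 1)

variable (k) in
theorem card_blockIdx : Fintype.card (BlockIdx k) = 2 * ∑ i, k i + t := by
  simp [Finset.sum_add_distrib, Finset.mul_sum]

def shiftDiag (k : Fin t → ℕ) (c : ℕ) : Matrix (BlockIdx k) (BlockIdx k) ℂ :=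
  blockDiagonal' fun i => shiftCoeff (k i) c

theorem shiftDiag_transpose (k : Fin t → ℕ) (c : ℕ) :
    (shiftDiag k c)ᵀ = -shiftDiag k c := by
  rw [shiftDiag, blockDiagonal'_transpose]
  simp_rw [shiftCoeff_transpose]
  exact blockDiagonal'_neg _

theorem WA_eq_shiftDiag (n w : ℕ) : WA n w = shiftDiag (genIdx n w) 0 :=
  congrArg blockDiagonal' (funext fun _ => MA_eq_shiftCoeff _)

theorem WB_eq_shiftDiag (n w : ℕ) : WB n w = shiftDiag (genIdx n w) 1 :=
  congrArg blockDiagonal' (funext fun _ => MB_eq_shiftCoeff _)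

-- Entry `(p, q)` of block `(i, j)`, and `0` outside the block. Rows `p < k i` of the block are
-- called top and rows `k i + a` bottom; likewise columns, with `k j`.
def blockEntry (X : Matrix (BlockIdx k) (BlockIdx k) ℂ) (i j : Fin t) (p q : ℕ) : ℂ :=
  if h : p < 2 * k i + 1 ∧ q < 2 * k j + 1 then X ⟨i, p, h.1⟩ ⟨j, q, h.2⟩ else 0

@[simp]
theorem blockEntry_val (X : Matrix (BlockIdx k) (BlockIdx k) ℂ) (i j : Fin t)
    (p : Fin (2 * k i + 1)) (q : Fin (2 * k j + 1)) :
    blockEntry X i j p q = X ⟨i, p⟩ ⟨j, q⟩ := by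
  rw [blockEntry, dif_pos ⟨p.2, q.2⟩]

theorem blockEntry_add (X Y : Matrix (BlockIdx k) (BlockIdx k) ℂ) (i j : Fin t) (p q : ℕ) :
    blockEntry (X + Y) i j p q = blockEntry X i j p q + blockEntry Y i j p q := by
  unfold blockEntry
  split_ifs <;> simp

theorem blockEntry_smul (a : ℂ) (X : Matrix (BlockIdx k) (BlockIdx k) ℂ) (i j : Fin t)
    (p q : ℕ) :
    blockEntry (a • X) i j p q = a * blockEntry X i j p q := by
  unfold blockEntry
  split_ifs <;> simp

theorem shiftDiag_mul_apply {c : ℕ} (hc : c ≤ 1) (X : Matrix (BlockIdx k) (BlockIdx k) ℂ)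
    (i j : Fin t) (p : Fin (2 * k i + 1)) (q : Fin (2 * k j + 1)) :
    (shiftDiag k c * X) ⟨i, p⟩ ⟨j, q⟩ =
      shiftAct (k i) c (fun a => blockEntry X i j a q) p := by
  rw [mul_apply, Fintype.sum_sigma, Finset.sum_eq_single i]
  · simp only [shiftDiag, blockDiagonal'_apply_eq, ← blockEntry_val X i j _ q]
    exact sum_shiftCoeff_mul hc p (fun a => blockEntry X i j a q)
  · intro b _ hb
    simp [shiftDiag, blockDiagonal'_apply_ne _ _ _ (Ne.symm hb)]
  · simp

theorem transpose_mul_shiftDiag_add_eq_zero_iff {c : ℕ} (hc : c ≤ 1)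
    {X : Matrix (BlockIdx k) (BlockIdx k) ℂ} :
    Xᵀ * shiftDiag k c + shiftDiag k c * X = 0 ↔
      ∀ (i j : Fin t) (p q : ℕ), p < 2 * k i + 1 → q < 2 * k j + 1 →
        shiftAct (k i) c (fun a => blockEntry X i j a q) p =
          shiftAct (k j) c (fun b => blockEntry X j i b p) q := by
  rw [transpose_mul_add_mul_eq_zero_iff (shiftDiag_transpose k c)]
  constructor
  · intro h i j p q hp hq
    have := congr_fun₂ h ⟨j, q, hq⟩ ⟨i, p, hp⟩
    rwa [transpose_apply, shiftDiag_mul_apply hc, shiftDiag_mul_apply hc] at this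
  · intro h
    ext ⟨j, q⟩ ⟨i, p⟩
    rw [transpose_apply, shiftDiag_mul_apply hc, shiftDiag_mul_apply hc]
    exact h i j p q p.2 q.2

-- Entrywise form of: `shiftDiag k c * X` is symmetric for `c = 0, 1`.
def ShiftSymmetric (X : Matrix (BlockIdx k) (BlockIdx k) ℂ) : Prop :=
  ∀ c ≤ 1, ∀ (i j : Fin t) (p q : ℕ), p < 2 * k i + 1 → q < 2 * k j + 1 →
    shiftAct (k i) c (fun a => blockEntry X i j a q) p =
      shiftAct (k j) c (fun b => blockEntry X j i b p) q

theorem mem_ker_congTangentMap_iff {X : Matrix (BlockIdx k) (BlockIdx k) ℂ} :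
    X ∈ LinearMap.ker (congTangentMap (shiftDiag k 0) (shiftDiag k 1)) ↔ ShiftSymmetric X := by
  simp only [LinearMap.mem_ker, congTangentMap, LinearMap.coe_mk, AddHom.coe_mk, Prod.mk_eq_zero,
    transpose_mul_shiftDiag_add_eq_zero_iff zero_le_one, transpose_mul_shiftDiag_add_eq_zero_iff
    le_rfl, ShiftSymmetric]
  constructor
  · rintro ⟨h0, h1⟩ c hc
    obtain rfl | rfl : c = 0 ∨ c = 1 := by omega
    exacts [h0, h1]
  · intro h
    exact ⟨h 0 zero_le_one, h 1 le_rfl⟩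

-- Antidiagonal `σ` of the bottom-left part of block `(i, j)`, read in the rightmost column that
-- meets it.
def hankelRead (X : Matrix (BlockIdx k) (BlockIdx k) ℂ) (i j : Fin t) (σ : ℕ) : ℂ :=
  blockEntry X i j (k i + (σ - min σ (k j - 1))) (min σ (k j - 1))

namespace ShiftSymmetric

variable {X : Matrix (BlockIdx k) (BlockIdx k) ℂ} (hX : ShiftSymmetric X) {i j : Fin t}
include hX

theorem bot_top_swap {c : ℕ} (hc : c ≤ 1) {p q : ℕ} (hp : p < k i) (hq : q < k j) :
    blockEntry X i j (k i + p + c) q = blockEntry X j i (k j + q + c) p := by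
  simpa only [shiftAct, if_pos hp, if_pos hq] using hX c hc i j p q (by omega) (by omega)

theorem bot_bot_eq_neg_top_top {c : ℕ} (hc : c ≤ 1) {p b : ℕ} (hp : p < k i)
    (hb : b ≤ k j) :
    blockEntry X i j (k i + p + c) (k j + b) =
      if c ≤ b ∧ b < k j + c then -blockEntry X j i (b - c) p else 0 := by
  have h := hX c hc i j p (k j + b) (by omega) (by omega)
  simpa only [shiftAct, if_pos hp, if_neg (show ¬k j + b < k j by omega),
    Nat.add_sub_cancel_left] using h

theorem top_bot_swap {c : ℕ} (hc : c ≤ 1) {a b : ℕ} (ha : a ≤ k i) (hb : b ≤ k j) :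
    (if c ≤ a ∧ a < k i + c then blockEntry X i j (a - c) (k j + b) else 0) =
      if c ≤ b ∧ b < k j + c then blockEntry X j i (b - c) (k i + a) else 0 := by
  have h := hX c hc i j (k i + a) (k j + b) (by omega) (by omega)
  simp only [shiftAct, if_neg (show ¬k j + b < k j by omega),
    if_neg (show ¬k i + a < k i by omega), Nat.add_sub_cancel_left] at h
  split_ifs at h ⊢ <;> first | rfl | linear_combination -h

-- The relations for `c = 0, 1` move such an entry one row up and one column right, and the walk
-- ends at a zero.
theorem top_bot_eq_zero {a b : ℕ} (ha : a < k i) (hb : b ≤ k j) :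
    blockEntry X i j a (k j + b) = 0 := by
  induction a using Nat.strong_induction_on generalizing b with
  | _ a ih =>
    have h0 := hX.top_bot_swap zero_le_one ha.le hb
    simp only [zero_le, true_and, Nat.sub_zero, add_zero, if_pos ha] at h0
    rw [h0]
    split_ifs with hbj
    · have h1 := hX.top_bot_swap le_rfl (a := b + 1) hbj ha.le
      simp only [le_add_iff_nonneg_left, zero_le, true_and, Nat.add_sub_cancel,
        if_pos (show b + 1 < k j + 1 by omega)] at h1
      rw [h1]
      split_ifs with ha1
      · exact ih (a - 1) (by omega) (by omega) (by omega)
      · rfl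
    · rfl

theorem top_top_eq_neg_bot_bot {p q : ℕ} (hp : p < k i) (hq : q < k j) :
    blockEntry X i j p q = -blockEntry X j i (k j + q) (k i + p) := by
  have h := hX.bot_bot_eq_neg_top_top zero_le_one hq hp.le
  simp only [add_zero, zero_le, true_and, Nat.sub_zero, if_pos hp] at h
  rw [h, neg_neg]

theorem bot_bot_succ {a b : ℕ} (ha : a < k i) (hb : b < k j) :
    blockEntry X i j (k i + a + 1) (k j + (b + 1)) = blockEntry X i j (k i + a) (k j + b) := by
  have h1 := hX.bot_bot_eq_neg_top_top le_rfl ha (b := b + 1) hb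
  have h0 := hX.bot_bot_eq_neg_top_top zero_le_one ha hb.le
  simp only [add_zero, zero_le, true_and, Nat.sub_zero, if_pos hb, le_add_iff_nonneg_left,
    Nat.add_sub_cancel, if_pos (show b + 1 < k j + 1 by omega)] at h0 h1
  rw [h0, h1]

theorem bot_first_col_eq_zero {a : ℕ} (ha : a < k i) :
    blockEntry X i j (k i + a + 1) (k j) = 0 := by
  simpa using hX.bot_bot_eq_neg_top_top le_rfl ha (j := j) (b := 0) (Nat.zero_le _)

theorem bot_last_col_eq_zero {a : ℕ} (ha : a < k i) :
    blockEntry X i j (k i + a) (k j + k j) = 0 := by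
  simpa using hX.bot_bot_eq_neg_top_top zero_le_one ha (j := j) le_rfl

theorem bot_bot_diag {a b : ℕ} (d : ℕ) (ha : a + d ≤ k i) (hb : b + d ≤ k j) :
    blockEntry X i j (k i + (a + d)) (k j + (b + d)) = blockEntry X i j (k i + a) (k j + b) := by
  induction d with
  | zero => rfl
  | succ d ih =>
    rw [← ih (by omega) (by omega)]
    exact hX.bot_bot_succ (i := i) (j := j) (a := a + d) (b := b + d) (by omega) (by omega)

theorem bot_bot_toeplitz {a b : ℕ} (ha : a ≤ k i) (hb : b ≤ k j) :
    blockEntry X i j (k i + a) (k j + b) =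
      if a ≤ b ∧ b + k i ≤ a + k j then blockEntry X i j (k i) (k j + (b - a)) else 0 := by
  rcases lt_or_ge b a with hba | hab
  · rw [if_neg (by omega)]
    have h := hX.bot_bot_diag (i := i) (j := j) (a := a - b - 1 + 1) (b := 0) b (by omega)
      (by omega)
    rw [show a - b - 1 + 1 + b = a by omega, zero_add, add_zero, ← add_assoc] at h
    rw [h, hX.bot_first_col_eq_zero (a := a - b - 1) (by omega)]
  · have hstart : ∀ d, d ≤ k i → b - a + d ≤ k j →
        blockEntry X i j (k i + d) (k j + (b - a + d)) = blockEntry X i j (k i) (k j + (b - a)) :=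
      fun d hd hd' => by
        simpa using hX.bot_bot_diag (i := i) (j := j) (a := 0) (b := b - a) d (by omega) hd'
    rw [show k j + b = k j + (b - a + a) by omega, hstart a ha (by omega)]
    split_ifs with hband
    · rfl
    · rw [← hstart (k j - (b - a)) (by omega) (by omega), Nat.add_sub_cancel' (by omega),
        hX.bot_last_col_eq_zero (by omega)]

theorem bot_top_succ {a b : ℕ} (ha : a < k i) (hb : b + 1 < k j) :
    blockEntry X i j (k i + a + 1) b = blockEntry X i j (k i + a) (b + 1) := by
  have h1 := hX.bot_top_swap le_rfl ha (by omega : b < k j)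
  have h0 := hX.bot_top_swap zero_le_one ha hb
  simp only [add_zero] at h0
  rw [h1, h0]
  rfl

theorem bot_top_antidiag {a b : ℕ} (d : ℕ) (ha : a + d ≤ k i) (hb : b + d < k j) :
    blockEntry X i j (k i + (a + d)) b = blockEntry X i j (k i + a) (b + d) := by
  induction d generalizing b with
  | zero => rfl
  | succ d ih =>
    rw [show b + (d + 1) = b + 1 + d by omega, ← ih (by omega) (by omega)]
    exact hX.bot_top_succ (a := a + d) (b := b) (by omega) (by omega)

theorem bot_top_eq_hankelRead {a b : ℕ} (ha : a ≤ k i) (hb : b < k j) :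
    blockEntry X i j (k i + a) b = hankelRead X i j (a + b) := by
  set μ := min (a + b) (k j - 1)
  have h := hX.bot_top_antidiag (i := i) (j := j) (a := a + b - μ) (b := b) (μ - b)
    (by omega) (by omega)
  rwa [show a + b - μ + (μ - b) = a by omega, show b + (μ - b) = μ by omega] at h

theorem bot_top_eq_hankelRead_swap (hk : k j ≤ k i) {a b : ℕ} (ha : a ≤ k i)
    (hb : b < k j) :
    blockEntry X i j (k i + a) b = hankelRead X j i (a + b) := by
  rcases lt_or_eq_of_le ha with ha | rfl
  · have h := hX.bot_top_swap zero_le_one ha hb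
    simp only [add_zero] at h
    rw [h, hX.bot_top_eq_hankelRead hb.le ha, add_comm]
  · have h := hX.bot_top_swap le_rfl (i := i) (p := k i - 1) (by omega) hb
    rw [show k i + (k i - 1) + 1 = k i + k i by omega] at h
    rw [h, add_assoc, hX.bot_top_eq_hankelRead (a := b + 1) hb (by omega)]
    congr 1
    omega

theorem bot_top_eq_hankelRead_max_min (hk : Antitone k) {a b : ℕ} (ha : a ≤ k i)
    (hb : b < k j) : blockEntry X i j (k i + a) b = hankelRead X (max i j) (min i j) (a + b) := by
  rcases le_total i j with hij | hji
  · rw [max_eq_right hij, min_eq_left hij]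
    exact hX.bot_top_eq_hankelRead_swap (hk hij) ha hb
  · rw [max_eq_left hji, min_eq_right hji]
    exact hX.bot_top_eq_hankelRead ha hb

end ShiftSymmetric

def zeroExtend {n : ℕ} (v : Fin n → ℂ) (a : ℕ) : ℂ :=
  if h : a < n then v ⟨a, h⟩ else 0

theorem zeroExtend_of_le {n : ℕ} (v : Fin n → ℂ) {a : ℕ} (h : n ≤ a) :
    zeroExtend v a = 0 :=
  dif_neg (by omega)

-- Coordinates on the kernel: for `i ≤ j`, the `k i + k j` antidiagonals shared by the bottom-left
-- parts of blocks `(i, j)` and `(j, i)`; for every `(i, j)`, the `k j + 1 - k i` free diagonals of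
-- the bottom-right part of block `(i, j)`.
variable (k) in
def hankelLen (p : Fin t × Fin t) : ℕ := if p.1 ≤ p.2 then k p.1 + k p.2 else 0

variable (k) in
def toeplitzLen (p : Fin t × Fin t) : ℕ := k p.2 + 1 - k p.1

variable (k) in
abbrev KerParams :=
  ((p : Fin t × Fin t) → Fin (hankelLen k p) → ℂ) ×
    ((p : Fin t × Fin t) → Fin (toeplitzLen k p) → ℂ)

namespace KerParams

variable (x : KerParams k)

def hankelPart (i j : Fin t) (a b : ℕ) : ℂ := zeroExtend (x.1 (min i j, max i j)) (a + b)

def toeplitzPart (i j : Fin t) (a b : ℕ) : ℂ :=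
  if a ≤ b then zeroExtend (x.2 (i, j)) (b - a) else 0

def entry (i j : Fin t) (p q : ℕ) : ℂ :=
  if p < k i then (if q < k j then -x.toeplitzPart j i q p else 0)
  else if q < k j then x.hankelPart i j (p - k i) q else x.toeplitzPart i j (p - k i) (q - k j)

def toMatrix : Matrix (BlockIdx k) (BlockIdx k) ℂ := of fun u v => x.entry u.1 v.1 u.2 v.2

theorem blockEntry_toMatrix {i j : Fin t} {p q : ℕ} (hp : p < 2 * k i + 1)
    (hq : q < 2 * k j + 1) :
    blockEntry x.toMatrix i j p q = x.entry i j p q := by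
  rw [blockEntry, dif_pos ⟨hp, hq⟩]
  rfl

theorem hankelPart_comm (i j : Fin t) (a b a' b' : ℕ) (h : a + b = a' + b') :
    x.hankelPart i j a b = x.hankelPart j i a' b' := by
  rw [hankelPart, hankelPart, min_comm, max_comm, h]

theorem toeplitzPart_shift {c : ℕ} (hc : c ≤ 1) {i j : Fin t} {p b : ℕ} (hp : p < k i) :
    x.toeplitzPart i j (p + c) b =
      if c ≤ b ∧ b < k j + c then x.toeplitzPart i j p (b - c) else 0 := by
  unfold toeplitzPart
  split_ifs <;> first
    | rfl
    | (exfalso; omega)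
    | exact zeroExtend_of_le _ (by dsimp only [toeplitzLen]; omega)
    | rw [show b - (p + c) = b - c - p by omega]

theorem shiftAct_entry {c : ℕ} (hc : c ≤ 1) (i j : Fin t) (p q : ℕ) :
    shiftAct (k i) c (fun a => x.entry i j a q) p =
      if p < k i then
        (if q < k j then x.hankelPart i j (p + c) q else x.toeplitzPart i j (p + c) (q - k j))
      else if c ≤ p - k i ∧ p - k i < k i + c ∧ q < k j then
        x.toeplitzPart j i q (p - k i - c) else 0 := by
  unfold shiftAct entry
  beta_reduce
  simp only [Nat.add_assoc, Nat.add_sub_cancel_left]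
  split_ifs <;> first | (exfalso; omega) | simp only [neg_neg, neg_zero]

theorem shiftSymmetric_toMatrix : ShiftSymmetric x.toMatrix := by
  intro c hc i j p q hp hq
  have mixed : ∀ {i j : Fin t} {p q : ℕ}, p < k i → k j ≤ q →
      x.toeplitzPart i j (p + c) (q - k j) = if c ≤ q - k j ∧ q - k j < k j + c ∧ p < k i then
        x.toeplitzPart i j p (q - k j - c) else 0 := fun hp hq => by
    simp only [x.toeplitzPart_shift hc hp, hp, and_true]
  rw [shiftAct_congr hc hp (fun a ha => x.blockEntry_toMatrix ha hq),
    shiftAct_congr hc hq (fun b hb => x.blockEntry_toMatrix hb hp),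
    x.shiftAct_entry hc, x.shiftAct_entry hc]
  rcases lt_or_ge p (k i) with hpi | hpi <;> rcases lt_or_ge q (k j) with hqj | hqj
  · simp only [if_pos hpi, if_pos hqj]
    exact x.hankelPart_comm _ _ _ _ _ _ (by omega)
  · simp only [if_pos hpi, if_neg (not_lt.2 hqj), mixed hpi hqj]
  · simp only [if_neg (not_lt.2 hpi), if_pos hqj, mixed hqj hpi]
  · rw [if_neg (not_lt.2 hpi), if_neg (not_lt.2 hqj), if_neg (by omega), if_neg (by omega)]

end KerParams

-- For `i ≤ j` the antidiagonals are read in block `(j, i)`, whose `k i ≥ k j` top columns meet all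
-- of them.
variable (k) in
def toKerParams : Matrix (BlockIdx k) (BlockIdx k) ℂ →ₗ[ℂ] KerParams k where
  toFun X := (fun p σ => hankelRead X p.2 p.1 σ,
    fun p d => blockEntry X p.1 p.2 (k p.1) (k p.2 + d))
  map_add' X Y := by
    ext <;> simp only [hankelRead, blockEntry_add, Prod.fst_add, Prod.snd_add, Pi.add_apply]
  map_smul' a X := by
    ext <;> simp only [hankelRead, blockEntry_smul, Prod.smul_fst, Prod.smul_snd, Pi.smul_apply,
      smul_eq_mul, RingHom.id_apply]

theorem hankelPart_toKerParams (X : Matrix (BlockIdx k) (BlockIdx k) ℂ) (i j : Fin t)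
    (a b : ℕ) :
    (toKerParams k X).hankelPart i j a b =
      if a + b < k i + k j then hankelRead X (max i j) (min i j) (a + b) else 0 := by
  have hlen : hankelLen k (min i j, max i j) = k i + k j := by
    rcases le_total i j with h | h <;> simp [hankelLen, h, add_comm]
  simp only [KerParams.hankelPart, zeroExtend, hlen]
  split_ifs <;> rfl

theorem toeplitzPart_toKerParams (X : Matrix (BlockIdx k) (BlockIdx k) ℂ) (i j : Fin t)
    (a b : ℕ) :
    (toKerParams k X).toeplitzPart i j a b =
      if a ≤ b ∧ b + k i ≤ a + k j then blockEntry X i j (k i) (k j + (b - a)) else 0 := by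
  have hlen : toeplitzLen k (i, j) = k j + 1 - k i := rfl
  unfold KerParams.toeplitzPart zeroExtend
  split_ifs with h1 h2 h3 h3 <;> first | rfl | (exfalso; rw [hlen] at *; omega)

theorem toKerParams_toMatrix (hk : Antitone k) (x : KerParams k) :
    toKerParams k x.toMatrix = x := by
  ext ⟨i, j⟩ σ
  · have hij : i ≤ j := by
      by_contra h
      have := σ.2
      simp [hankelLen, h] at this
    have hσ : σ.1 < k i + k j := by simpa [hankelLen, hij] using σ.2
    have hkji := hk hij
    show hankelRead x.toMatrix j i σ = x.1 (i, j) σ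
    rw [hankelRead, x.blockEntry_toMatrix (by omega) (by omega), KerParams.entry,
      if_neg (by omega), if_pos (by omega), Nat.add_sub_cancel_left, KerParams.hankelPart,
      min_eq_right hij, max_eq_left hij, Nat.sub_add_cancel (min_le_left _ _), zeroExtend,
      dif_pos σ.2]
  · show blockEntry x.toMatrix i j (k i) (k j + σ) = x.2 (i, j) σ
    have hσ : σ.1 < k j + 1 - k i := σ.2
    rw [x.blockEntry_toMatrix (by omega) (by omega), KerParams.entry, if_neg (by omega),
      if_neg (by omega), Nat.sub_self, Nat.add_sub_cancel_left, KerParams.toeplitzPart,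
      if_pos (Nat.zero_le _), Nat.sub_zero, zeroExtend, dif_pos σ.2]

theorem ShiftSymmetric.toMatrix_toKerParams {X : Matrix (BlockIdx k) (BlockIdx k) ℂ}
    (hX : ShiftSymmetric X) (hk : Antitone k) : (toKerParams k X).toMatrix = X := by
  ext ⟨i, p⟩ ⟨j, q⟩
  show (toKerParams k X).entry i j p q = X ⟨i, p⟩ ⟨j, q⟩
  rw [← blockEntry_val X i j p q, KerParams.entry]
  obtain ⟨p, hp⟩ := p
  obtain ⟨q, hq⟩ := q
  dsimp only
  rcases lt_or_ge p (k i) with hpi | hpi <;> rcases lt_or_ge q (k j) with hqj | hqj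
  · rw [if_pos hpi, if_pos hqj, toeplitzPart_toKerParams, hX.top_top_eq_neg_bot_bot hpi hqj,
      hX.bot_bot_toeplitz hqj.le hpi.le]
  · rw [if_pos hpi, if_neg (not_lt.2 hqj), ← Nat.add_sub_cancel' hqj,
      hX.top_bot_eq_zero hpi (by omega)]
  · rw [if_neg (not_lt.2 hpi), if_pos hqj, hankelPart_toKerParams, if_pos (by omega),
      ← hX.bot_top_eq_hankelRead_max_min hk (by omega) hqj, Nat.add_sub_cancel' hpi]
  · rw [if_neg (not_lt.2 hpi), if_neg (not_lt.2 hqj), toeplitzPart_toKerParams,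
      ← hX.bot_bot_toeplitz (by omega) (by omega), Nat.add_sub_cancel' hpi,
      Nat.add_sub_cancel' hqj]

def kerEquivKerParams (hk : Antitone k) :
    LinearMap.ker (congTangentMap (shiftDiag k 0) (shiftDiag k 1)) ≃ₗ[ℂ] KerParams k where
  __ := toKerParams k ∘ₗ (LinearMap.ker _).subtype
  invFun x := ⟨x.toMatrix, mem_ker_congTangentMap_iff.2 x.shiftSymmetric_toMatrix⟩
  left_inv X := Subtype.ext ((mem_ker_congTangentMap_iff.1 X.2).toMatrix_toKerParams hk)
  right_inv := toKerParams_toMatrix hk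

theorem finrank_ker_congTangentMap (hk : Antitone k) :
    Module.finrank ℂ (LinearMap.ker (congTangentMap (shiftDiag k 0) (shiftDiag k 1))) =
      ∑ p, hankelLen k p + ∑ p, toeplitzLen k p := by
  rw [(kerEquivKerParams hk).finrank_eq, Module.finrank_prod, Module.finrank_pi_fintype,
    Module.finrank_pi_fintype]
  simp

theorem sum_swap_add_self {α : Type*} [Fintype α] (f : α × α → ℕ) :
    ∑ p, (f p + f p.swap) = 2 * ∑ p, f p := by
  rw [Finset.sum_add_distrib, two_mul,
    Fintype.sum_equiv (Equiv.prodComm α α) (fun p => f p.swap) f (fun _ => rfl)]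

variable (k) in
theorem sum_hankelLen : ∑ p, hankelLen k p = (t + 1) * ∑ i, k i := by
  have hpair : ∀ p : Fin t × Fin t, hankelLen k p + hankelLen k p.swap =
      (k p.1 + k p.2) + if p.1 = p.2 then k p.1 + k p.2 else 0 := by
    rintro ⟨i, j⟩
    simp only [hankelLen, Prod.swap]
    rcases lt_trichotomy i j with h | rfl | h
    · simp [h.le, h.ne, not_le.2 h]
    · simp
    · simp [h.le, h.ne', not_le.2 h, add_comm]
  have hlin : ∑ p : Fin t × Fin t, (k p.1 + k p.2) = 2 * (t * ∑ i, k i) := by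
    simp [Fintype.sum_prod_type, Finset.sum_add_distrib, Finset.mul_sum, two_mul]
  have hdiag :
      ∑ p : Fin t × Fin t, (if p.1 = p.2 then k p.1 + k p.2 else 0) = 2 * ∑ i, k i := by
    simp [Fintype.sum_prod_type, Finset.mul_sum, two_mul]
  have h := sum_swap_add_self (hankelLen k)
  rw [Finset.sum_congr rfl fun p _ => hpair p, Finset.sum_add_distrib, hlin, hdiag] at h
  linarith

theorem sum_toeplitzLen (hk : ∀ i j, k i ≤ k j + 1) : ∑ p, toeplitzLen k p = t * t := by
  have hpair : ∀ p : Fin t × Fin t, toeplitzLen k p + toeplitzLen k p.swap = 2 := fun p => by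
    simp only [toeplitzLen, Prod.fst_swap, Prod.snd_swap]
    have := hk p.1 p.2
    have := hk p.2 p.1
    omega
  have h := sum_swap_add_self (toeplitzLen k)
  simp only [hpair, Finset.sum_const, Finset.card_univ, Fintype.card_prod, Fintype.card_fin,
    smul_eq_mul] at h
  linarith

theorem finrank_range_congTangentMap_add_eq_sq (hk : Antitone k)
    (hk1 : ∀ i j, k i ≤ k j + 1) :
    Module.finrank ℂ (LinearMap.range (congTangentMap (shiftDiag k 0) (shiftDiag k 1))) +
      ((t + 1) * ∑ i, k i + t * t) = (2 * ∑ i, k i + t) ^ 2 := by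
  rw [← sum_hankelLen, ← sum_toeplitzLen hk1, ← finrank_ker_congTangentMap hk,
    LinearMap.finrank_range_add_finrank_ker, Module.finrank_matrix, card_blockIdx,
    Module.finrank_self, mul_one, sq]

theorem finrank_range_congTangentMap_shiftDiag (hk : Antitone k)
    (hk1 : ∀ i j, k i ≤ k j + 1) :
    Module.finrank ℂ (LinearMap.range (congTangentMap (shiftDiag k 0) (shiftDiag k 1))) =
      (2 * ∑ i, k i + t) * (2 * ∑ i, k i + t - 1) - (t - 1) * (∑ i, k i + t) := by
  have h := finrank_range_congTangentMap_add_eq_sq hk hk1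
  rcases Nat.eq_zero_or_pos t with rfl | ht
  · simpa using h
  obtain ⟨s, rfl⟩ : ∃ s, t = s + 1 := ⟨t - 1, by omega⟩
  rw [← add_assoc, Nat.add_sub_cancel, Nat.add_sub_cancel]
  refine Nat.eq_sub_of_add_eq ?_
  linarith

theorem finrank_range_congTangentMap_reindex {ι κ : Type*} [Fintype ι] [DecidableEq ι]
    [Fintype κ] [DecidableEq κ] (e : ι ≃ κ) (A B : Matrix ι ι ℂ) :
    Module.finrank ℂ (LinearMap.range (congTangentMap (reindex e e A) (reindex e e B))) =
      Module.finrank ℂ (LinearMap.range (congTangentMap A B)) := by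
  let E := reindexLinearEquiv ℂ ℂ e e
  have hconj : congTangentMap (reindex e e A) (reindex e e B) =
      (E.prodCongr E).toLinearMap ∘ₗ congTangentMap A B ∘ₗ E.symm.toLinearMap := by
    ext X : 1
    obtain ⟨Y, rfl⟩ := E.surjective X
    simp [E, congTangentMap, submatrix_add]
  rw [hconj, LinearMap.range_comp, LinearMap.range_comp_of_range_eq_top _ (LinearEquiv.range _),
    LinearEquiv.finrank_map_eq]

theorem genIdx_antitone (n w : ℕ) : Antitone (genIdx n w) := by
  intro i j hij
  have : i.1 ≤ j.1 := hij
  unfold genIdx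
  split_ifs <;> omega

theorem genIdx_le_succ (n w : ℕ) (i j : Fin (n - 2 * w)) :
    genIdx n w i ≤ genIdx n w j + 1 := by
  unfold genIdx
  split_ifs <;> omega

theorem sum_genIdx {n w : ℕ} (h : 2 * w < n) : ∑ i, genIdx n w i = w := by
  have hsplit : ∀ i : Fin (n - 2 * w),
      genIdx n w i = w / (n - 2 * w) + if i.1 < w % (n - 2 * w) then 1 else 0 := fun i => by
    unfold genIdx
    split_ifs <;> rfl
  simp only [hsplit, Finset.sum_add_distrib, Finset.sum_const, Finset.card_univ,
    Fintype.card_fin, smul_eq_mul, Finset.sum_boole, Nat.cast_id, Fin.card_filter_val_lt,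
    min_eq_right (Nat.mod_lt w (show 0 < n - 2 * w by omega)).le]
  exact Nat.div_add_mod w (n - 2 * w)

end SkewPencil

open SkewPencil in
theorem codim_congOrbit_generic_linearization_general
    (m r d : ℕ) (hm : 2 ≤ m) (hd : Odd d) (hrm : 2 * r ≤ m - 1)
    (w : ℕ) (hw : 2 * w = m * (d - 1) + 2 * r)
    (e : ((i : Fin (m*d - 2*w)) × Fin (2 * genIdx (m*d) w i + 1)) ≃ Fin (m*d)) :
    Module.finrank ℂ
        (LinearMap.range (congTangentMap (Matrix.reindex e e (WA (m*d) w))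
          (Matrix.reindex e e (WB (m*d) w)))) =
      m*d * (m*d - 1) - (m - 2*r - 1) * (m * (d+1) - 2*r) / 2 := by
  have hmd : m * (d - 1) + m = m * d := by rw [← mul_add_one, Nat.sub_one_add_one hd.pos.ne']
  have hn : m * d = 2 * w + (m - 2 * r) := by omega
  have hcodim : m * (d + 1) - 2 * r = 2 * (w + (m - 2 * r)) := by rw [mul_add_one]; omega
  rw [finrank_range_congTangentMap_reindex, WA_eq_shiftDiag, WB_eq_shiftDiag,
    finrank_range_congTangentMap_shiftDiag (genIdx_antitone _ _) (genIdx_le_succ _ _),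
    sum_genIdx (by omega), hcodim, hn, Nat.add_sub_cancel_left, mul_left_comm,
    Nat.mul_div_cancel_left _ two_pos, Nat.sub_sub]

/-- The codimension of the congruence orbit of the generic `md × md`
skew-symmetric pencil `𝒲` (with `n = md`, `w = (m(d−1)+2r)/2`) in the space of `md × md`
skew-symmetric pencils equals `(1/2)(m−2r−1)(m(d+1)−2r)`; equivalently, the tangent
space at `𝒲` has dimension `n(n−1) − (1/2)(m−2r−1)(m(d+1)−2r)`. -/
theorem codim_congOrbit_generic_linearization
    (m r d : ℕ) (hm : 2 ≤ m) (hd : Odd d) (hr : 2 ≤ 2 * r) (hrm : 2 * r ≤ m - 1)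
    (w : ℕ) (hw : 2 * w = m * (d - 1) + 2 * r)
    (e : ((i : Fin (m*d - 2*w)) × Fin (2 * genIdx (m*d) w i + 1)) ≃ Fin (m*d)) :
    Module.finrank ℂ
        (LinearMap.range (congTangentMap (Matrix.reindex e e (WA (m*d) w))
          (Matrix.reindex e e (WB (m*d) w)))) =
      m*d * (m*d - 1) - (m - 2*r - 1) * (m * (d+1) - 2*r) / 2 :=
  codim_congOrbit_generic_linearization_general m r d hm hd hrm w hw e
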